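/- One-point basis maker correctness: let n ≥ 1, let E_1,…,E_n be λ-terms, and let D be a λ-term in which the variable b does not occur free such that (D c_k) =βη E_k for each 1 ≤ k ≤ n. Put M = λmba.(Zero b ⟨m, (Succ a)⟩ (D b)) and X = ⟨M, c_0⟩ (with m, b, a fresh variables). Then for each 1 ≤ k ≤ n, the application of X to the left-associated application of k+1 copies of X satisfies (X (X X ⋯ X)) =βη E_k; in particular every E_k is generated by the single term X. -/

import Mathlib

/-!
A pair is eliminated by application, `⟨P, Q⟩ W ↠ W P Q`. By induction on `m`, the
left-associated product of `m + 1` copies of `X = ⟨M, c₀⟩` behaves like the pair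
`⟨M, c_m⟩`: applied to `X` it gives
`X M c_m ↠ M M c₀ c_m ↠ Zero c₀ ⟨M, Succ c_m⟩ (D c₀) ↠ ⟨M, Succ c_m⟩`,
and `Succ c_m ↠ c_{m+1}`. For `k ≥ 1` the other branch of the zero test is taken:
`X (X ⋯ X) ↠ (X ⋯ X) M c₀ ↠ M M c_k c₀ ↠ Zero c_k ⟨M, Succ c₀⟩ (D c_k) ↠ D c_k`,
and the hypothesis `D c_k =βη E_k` finishes.
-/

namespace LC

/-- Untyped λ-terms, de Bruijn indices. -/
inductive Tm : Type
  | var : ℕ → Tm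
  | app : Tm → Tm → Tm
  | lam : Tm → Tm
  deriving DecidableEq

namespace Tm

/-- Shift the free variables ≥ c up by one. -/
def lift (c : ℕ) : Tm → Tm
  | var n => if n < c then var n else var (n + 1)
  | app a b => app (lift c a) (lift c b)
  | lam a => lam (lift (c + 1) a)

/-- Substitute `s` for the free variable `k`. -/
def subst (k : ℕ) (s : Tm) : Tm → Tm
  | var n => if n = k then s else if k < n then var (n - 1) else var n
  | app a b => app (subst k s a) (subst k s b)
  | lam a => lam (subst (k + 1) (lift 0 s) a)

/-- One-step βη-reduction (with congruence closure). -/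
inductive Step : Tm → Tm → Prop
  | beta (a b : Tm) : Step (app (lam a) b) (subst 0 b a)
  | eta (a : Tm) : Step (lam (app (lift 0 a) (var 0))) a
  | appL {a a' : Tm} (b : Tm) : Step a a' → Step (app a b) (app a' b)
  | appR (a : Tm) {b b' : Tm} : Step b b' → Step (app a b) (app a b')
  | lamCongr {a a' : Tm} : Step a a' → Step (lam a) (lam a')

/-- βη-equivalence: the equivalence relation generated by βη-reduction. -/
def BetaEta : Tm → Tm → Prop := Relation.EqvGen Step

/-- Multi-step βη-reduction: reflexive-transitive closure of βη-reduction. -/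
def Reduces : Tm → Tm → Prop := Relation.ReflTransGen Step

/-- I = λx.x -/
def I : Tm := lam (var 0)
/-- K = λxy.x -/
def K : Tm := lam (lam (var 1))
/-- B = λxyz.(x (y z)) -/
def B : Tm := lam (lam (lam (app (var 2) (app (var 1) (var 0)))))
/-- C = λxyz.(x z y) -/
def C : Tm := lam (lam (lam (app (app (var 2) (var 0)) (var 1))))
/-- S = λxyz.(x z (y z)) -/
def S : Tm := lam (lam (lam (app (app (var 2) (var 0)) (app (var 1) (var 0)))))

/-- body of the n-th Church numeral: s (s ⋯ (s z)⋯), n times. -/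
def churchBody : ℕ → Tm
  | 0 => var 0
  | n + 1 => app (var 1) (churchBody n)

/-- The n-th Church numeral c_n = λsz.(s (s ⋯ (s z)⋯)). -/
def church (n : ℕ) : Tm := lam (lam (churchBody n))

/-- n nested λ-abstractions. -/
def lamN : ℕ → Tm → Tm
  | 0, t => t
  | n + 1, t => lam (lamN n t)

/-- Shift all free variables up by n. -/
def liftN (n : ℕ) (t : Tm) : Tm := (lift 0)^[n] t

/-- t (var (a+k-1)) ⋯ (var (a+1)) (var a) : left-associated application of t
to k variables with descending indices. -/
def appVars (t : Tm) (a k : ℕ) : Tm :=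
  ((List.range k).reverse).foldl (fun s i => app s (var (a + i))) t

/-- t (var a) (var (a+1)) ⋯ (var (a+k-1)) : left-associated application of t
to k variables with ascending indices. -/
def appVarsAsc (t : Tm) (a k : ℕ) : Tm :=
  (List.range k).foldl (fun s i => app s (var (a + i))) t

/-- Left-associated application of t to a list of terms. -/
def appList (t : Tm) (l : List Tm) : Tm := l.foldl app t

/-- K_n = λp x_1…x_n. p -/
def Kn (n : ℕ) : Tm := lamN (n + 1) (var n)
/-- S_n = λpq x_1…x_n.(p x_1⋯x_n (q x_1⋯x_n)) -/
def Sn (n : ℕ) : Tm :=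
  lamN (n + 2) (app (appVars (var (n + 1)) 0 n) (appVars (var n) 0 n))
/-- B_n = λpq x_1…x_n.(p (q x_1⋯x_n)) -/
def Bn (n : ℕ) : Tm := lamN (n + 2) (app (var (n + 1)) (appVars (var n) 0 n))
/-- C_n = λpq x_1…x_n.(p x_1⋯x_n q) -/
def Cn (n : ℕ) : Tm := lamN (n + 2) (app (appVars (var (n + 1)) 0 n) (var n))


/-- Ordered pair ⟨P, Q⟩ = λz.(z P Q), z fresh. -/
def pair (P Q : Tm) : Tm := lam (app (app (var 0) (lift 0 P)) (lift 0 Q))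

/-- True = λxy.x -/
def TrueTm : Tm := lam (lam (var 1))
/-- False = λxy.y -/
def FalseTm : Tm := lam (lam (var 0))
/-- Zero = λn.(n (λx.False) True), the zero-predicate on Church numerals. -/
def ZeroTm : Tm := lam (app (app (var 0) (lam FalseTm)) TrueTm)
/-- Succ = λnsz.(s (n s z)), the successor on Church numerals. -/
def SuccTm : Tm := lam (lam (lam (app (var 1) (app (app (var 2) (var 1)) (var 0)))))

/-- M = λmba.(Zero b ⟨m, (Succ a)⟩ (D b)), with m, b, a fresh (in particular
b not free in D, hence D is shifted under the three binders). -/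
def Mker (D : Tm) : Tm :=
  lam (lam (lam (app (app (app ZeroTm (var 1))
    (pair (var 2) (app SuccTm (var 0)))) (app (liftN 3 D) (var 1)))))

/-- X = ⟨M, c_0⟩. -/
def X (D : Tm) : Tm := pair (Mker D) (church 0)

/-- Left-associated application of m+1 copies of t: t t ⋯ t. -/
def selfApps (t : Tm) : ℕ → Tm
  | 0 => t
  | m + 1 => app (selfApps t m) t

theorem lift_lift (t : Tm) : ∀ c c', c' ≤ c →
    lift (c + 1) (lift c' t) = lift c' (lift c t) := by
  induction t with
  | var n =>
    intro c c' h
    simp only [lift]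
    split_ifs <;> simp only [lift] <;> split_ifs <;> first | rfl | (congr 1; omega)
  | app a b iha ihb => intro c c' h; simp [lift, iha _ _ h, ihb _ _ h]
  | lam a ih => intro c c' h; simp [lift, ih (c + 1) (c' + 1) (by omega)]

@[simp]
theorem subst_lift (t : Tm) : ∀ k s, subst k s (lift k t) = t := by
  induction t with
  | var n =>
    intro k s
    simp only [lift]
    split_ifs <;> simp only [subst] <;> split_ifs <;> first | rfl | (congr 1; omega)
  | app a b iha ihb => intro k s; simp [lift, subst, iha, ihb]
  | lam a ih => intro k s; simp [lift, subst, ih]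

theorem subst_lift_comm (t : Tm) : ∀ c k s, c ≤ k →
    subst (k + 1) (lift c s) (lift c t) = lift c (subst k s t) := by
  induction t with
  | var n =>
    intro c k s h
    simp only [lift, subst]
    split_ifs <;> simp only [subst, lift] <;> split_ifs <;> first | rfl | (congr 1; omega)
  | app a b iha ihb => intro c k s h; simp [lift, subst, iha _ _ _ h, ihb _ _ _ h]
  | lam a ih =>
    intro c k s h
    simp only [lift, subst]
    rw [← lift_lift s c 0 (by omega), ih (c + 1) (k + 1) (lift 0 s) (by omega)]

@[simp]
theorem subst_succ_lift_zero (t s : Tm) (k : ℕ) :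
    subst (k + 1) (lift 0 s) (lift 0 t) = lift 0 (subst k s t) :=
  subst_lift_comm t 0 k s k.zero_le

def closedAt (c : ℕ) : Tm → Bool
  | var n => n < c
  | app a b => closedAt c a && closedAt c b
  | lam a => closedAt (c + 1) a

theorem lift_eq_self_of_closedAt (t : Tm) : ∀ c c', c ≤ c' → closedAt c t = true →
    lift c' t = t := by
  induction t with
  | var n =>
    intro c c' h hc
    simp only [closedAt, decide_eq_true_eq] at hc
    simp [lift]
    omega
  | app a b iha ihb =>
    intro c c' h hc
    simp only [closedAt, Bool.and_eq_true] at hc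
    simp [lift, iha _ _ h hc.1, ihb _ _ h hc.2]
  | lam a ih =>
    intro c c' h hc
    simp only [closedAt] at hc
    simp [lift, ih (c + 1) (c' + 1) (by omega) hc]

theorem subst_eq_self_of_closedAt (t : Tm) : ∀ c k s, c ≤ k → closedAt c t = true →
    subst k s t = t := by
  induction t with
  | var n =>
    intro c k s h hc
    simp only [closedAt, decide_eq_true_eq] at hc
    simp only [subst]
    split_ifs <;> first | rfl | omega
  | app a b iha ihb =>
    intro c k s h hc
    simp only [closedAt, Bool.and_eq_true] at hc
    simp [subst, iha _ _ _ h hc.1, ihb _ _ _ h hc.2]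
  | lam a ih =>
    intro c k s h hc
    simp only [closedAt] at hc
    simp [subst, ih (c + 1) (k + 1) _ (by omega) hc]

theorem closedAt_church (m : ℕ) : closedAt 0 (church m) = true := by
  change closedAt 2 (churchBody m) = true
  induction m with
  | zero => rfl
  | succ m ih => simp [churchBody, closedAt, ih]

@[simp]
theorem lift_church (c m : ℕ) : lift c (church m) = church m :=
  lift_eq_self_of_closedAt _ 0 c c.zero_le (closedAt_church m)

@[simp]
theorem subst_church (k : ℕ) (s : Tm) (m : ℕ) : subst k s (church m) = church m :=
  subst_eq_self_of_closedAt _ 0 k s k.zero_le (closedAt_church m)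

@[simp]
theorem subst_pair (k : ℕ) (s A B : Tm) :
    subst k s (pair A B) = pair (subst k s A) (subst k s B) := by
  simp [pair, subst, subst_lift_comm A 0 k s k.zero_le, subst_lift_comm B 0 k s k.zero_le]

local infix:50 " ↠ " => Reduces

namespace Reduces

theorem single {a b : Tm} (h : Step a b) : a ↠ b :=
  Relation.ReflTransGen.single h

theorem trans {a b c : Tm} (hab : a ↠ b) (hbc : b ↠ c) : a ↠ c :=
  Relation.ReflTransGen.trans hab hbc

instance : Trans Reduces Reduces Reduces := ⟨trans⟩

theorem app_left {a a' : Tm} (b : Tm) (h : a ↠ a') : app a b ↠ app a' b :=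
  Relation.ReflTransGen.lift (app · b) (fun _ _ => Step.appL b) _ _ h

theorem app_right (a : Tm) {b b' : Tm} (h : b ↠ b') : app a b ↠ app a b' :=
  Relation.ReflTransGen.lift (app a ·) (fun _ _ => Step.appR a) _ _ h

theorem lam {a a' : Tm} (h : a ↠ a') : lam a ↠ lam a' :=
  Relation.ReflTransGen.lift Tm.lam (fun _ _ => Step.lamCongr) _ _ h

theorem betaEta {a b : Tm} (h : a ↠ b) : BetaEta a b :=
  Relation.EqvGen.reflTransGen_le_eqvGen Step _ _ h

end Reduces

-- The reduct is passed as an equation, so that callers compute it with `simp [subst]`.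
theorem beta_reduces {a b c : Tm} (h : subst 0 b a = c) : app (lam a) b ↠ c :=
  h ▸ .single (Step.beta a b)

theorem beta₂_reduces {a P Q c : Tm} (h : subst 0 Q (subst 1 (lift 0 P) a) = c) :
    app (app (lam (lam a)) P) Q ↠ c :=
  ((beta_reduces rfl).app_left Q).trans (beta_reduces h)

theorem beta₃_reduces {a P Q R c : Tm}
    (h : subst 0 R (subst 1 (lift 0 Q) (subst 2 (lift 0 (lift 0 P)) a)) = c) :
    app (app (app (lam (lam (lam a))) P) Q) R ↠ c :=
  (((beta_reduces rfl).app_left Q).app_left R).trans (beta₂_reduces h)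

theorem pair_app_reduces (A B Z : Tm) : app (pair A B) Z ↠ app (app Z A) B :=
  beta_reduces (by simp [subst])

theorem true_app_reduces (A B : Tm) : app (app TrueTm A) B ↠ A :=
  beta₂_reduces (by simp [subst])

theorem false_app_reduces (A B : Tm) : app (app FalseTm A) B ↠ B :=
  beta₂_reduces (by simp [subst])

theorem subst_churchBody (A B : Tm) (m : ℕ) :
    subst 0 B (subst 1 (lift 0 A) (churchBody m)) = (app A)^[m] B := by
  induction m with
  | zero => simp [churchBody, subst]
  | succ m ih => simp [churchBody, subst, ih, Function.iterate_succ_apply']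

theorem church_app_reduces (A B : Tm) (m : ℕ) : app (app (church m) A) B ↠ (app A)^[m] B :=
  beta₂_reduces (subst_churchBody A B m)

theorem churchBody_eq_iterate (m : ℕ) : churchBody m = (app (var 1))^[m] (var 0) := by
  induction m with
  | zero => rfl
  | succ m ih => rw [Function.iterate_succ_apply', ← ih, churchBody]

theorem succ_church_reduces (m : ℕ) : app SuccTm (church m) ↠ church (m + 1) :=
  calc app SuccTm (church m)
    _ ↠ lam (lam (app (var 1) (app (app (church m) (var 1)) (var 0)))) :=
        beta_reduces (by simp [subst])
    _ ↠ church (m + 1) := by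
        have h := church_app_reduces (var 1) (var 0) m
        rw [← churchBody_eq_iterate] at h
        exact (h.app_right (var 1)).lam.lam

theorem zero_church_reduces (m : ℕ) :
    app ZeroTm (church m) ↠ (app (lam FalseTm))^[m] TrueTm :=
  calc app ZeroTm (church m)
    _ ↠ app (app (church m) (lam FalseTm)) TrueTm :=
        beta_reduces (by simp [subst, FalseTm, TrueTm])
    _ ↠ _ := church_app_reduces _ _ m

theorem zero_church_zero_reduces : app ZeroTm (church 0) ↠ TrueTm :=
  zero_church_reduces 0

theorem zero_church_succ_reduces (m : ℕ) : app ZeroTm (church (m + 1)) ↠ FalseTm := by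
  refine (zero_church_reduces (m + 1)).trans ?_
  rw [Function.iterate_succ_apply']
  exact beta_reduces (by simp [FalseTm, subst])

theorem mker_app_reduces (D P Q R : Tm) :
    app (app (app (Mker D) P) Q) R ↠
      app (app (app ZeroTm Q) (pair P (app SuccTm R))) (app D Q) :=
  beta₃_reduces (by simp [subst, liftN, ZeroTm, SuccTm, FalseTm, TrueTm])

theorem selfApps_app_reduces (D : Tm) (m : ℕ) (W : Tm) :
    app (selfApps (X D) m) W ↠ app (app W (Mker D)) (church m) := by
  induction m generalizing W with
  | zero => exact pair_app_reduces (Mker D) (church 0) W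
  | succ m ih =>
    calc app (app (selfApps (X D) m) (X D)) W
      _ ↠ app (app (app (X D) (Mker D)) (church m)) W := (ih (X D)).app_left W
      _ ↠ app (app (app (app (Mker D) (Mker D)) (church 0)) (church m)) W :=
          ((pair_app_reduces _ _ _).app_left _).app_left W
      _ ↠ app (app (app (app ZeroTm (church 0)) (pair (Mker D) (app SuccTm (church m))))
            (app D (church 0))) W := (mker_app_reduces _ _ _ _).app_left W
      _ ↠ app (app (app TrueTm (pair (Mker D) (app SuccTm (church m))))
            (app D (church 0))) W :=
          ((zero_church_zero_reduces.app_left _).app_left _).app_left W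
      _ ↠ app (pair (Mker D) (app SuccTm (church m))) W := (true_app_reduces _ _).app_left W
      _ ↠ app (app W (Mker D)) (app SuccTm (church m)) := pair_app_reduces _ _ W
      _ ↠ app (app W (Mker D)) (church (m + 1)) := (succ_church_reduces m).app_right _

theorem X_app_selfApps_reduces (D : Tm) (k : ℕ) :
    app (X D) (selfApps (X D) (k + 1)) ↠ app D (church (k + 1)) :=
  calc app (X D) (selfApps (X D) (k + 1))
    _ ↠ app (app (selfApps (X D) (k + 1)) (Mker D)) (church 0) := pair_app_reduces _ _ _
    _ ↠ app (app (app (Mker D) (Mker D)) (church (k + 1))) (church 0) :=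
        (selfApps_app_reduces D (k + 1) (Mker D)).app_left _
    _ ↠ app (app (app ZeroTm (church (k + 1))) (pair (Mker D) (app SuccTm (church 0))))
          (app D (church (k + 1))) := mker_app_reduces _ _ _ _
    _ ↠ app (app FalseTm (pair (Mker D) (app SuccTm (church 0)))) (app D (church (k + 1))) :=
        ((zero_church_succ_reduces k).app_left _).app_left _
    _ ↠ app D (church (k + 1)) := false_app_reduces _ _

theorem one_point_basis_general (n : ℕ) (E : ℕ → Tm) (D : Tm)
    (hD : ∀ k, 1 ≤ k → k ≤ n → BetaEta (app D (church k)) (E k)) :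
    ∀ k, 1 ≤ k → k ≤ n → BetaEta (app (X D) (selfApps (X D) k)) (E k) := by
  intro k hk hkn
  obtain ⟨j, rfl⟩ : ∃ j, k = j + 1 := ⟨k - 1, by omega⟩
  exact .trans _ _ _ (X_app_selfApps_reduces D j).betaEta (hD _ hk hkn)

/-- one-point basis maker correctness.  If (D c_k) =βη E_k for
each 1 ≤ k ≤ n, then with X = ⟨M, c_0⟩ as above, applying X to the
left-associated application of k+1 copies of X yields E_k:
(X (X X ⋯ X)) =βη E_k. -/
theorem one_point_basis (n : ℕ) (hn : 1 ≤ n) (E : ℕ → Tm) (D : Tm)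
    (hD : ∀ k, 1 ≤ k → k ≤ n → BetaEta (app D (church k)) (E k)) :
    ∀ k, 1 ≤ k → k ≤ n → BetaEta (app (X D) (selfApps (X D) k)) (E k) :=
  one_point_basis_general n E D hD

end Tm
end LC
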